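/- arXiv:1604.02737 — 8 statements merged into one kernel-verified Lean document; each statement's English description precedes it below -/
import Mathlib

section
/- For every player i ∈ V, every joint action x ∈ A, and every alternative action x'_i ∈ A_i, the payoff difference in the MRF-induced game equals the Gibbs-potential difference: M_i(x_i, x_{-i}) − M_i(x'_i, x_{-i}) = Ψ(x_i, x_{-i}) − Ψ(x'_i, x_{-i}). Hence the MRF-induced game is an exact potential game with potential function Ψ. -/
open Finset

/-- In the MRF-induced game, for every player `i`, joint action `x`,
and alternative action `x'i`, the payoff difference equals the Gibbs-potential
difference; i.e., the MRF-induced game is an exact potential game with potential `Ψ`. -/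
theorem mrf_game_exact_potential
    {V : Type*} [Fintype V] [DecidableEq V]
    {A : V → Type*} [∀ v, Fintype (A v)] [∀ v, Nonempty (A v)]
    (𝒞 : Finset (Finset V))
    (φ : (C : Finset V) → ((j : {v // v ∈ C}) → A j.val) → ℝ)
    (Ψ : (∀ v, A v) → ℝ)
    (hΨ : ∀ x, Ψ x = ∑ C ∈ 𝒞, φ C (fun j => x j.val))
    (M : V → (∀ v, A v) → ℝ)
    (hM : ∀ i x, M i x = ∑ C ∈ 𝒞.filter (fun C => i ∈ C), φ C (fun j => x j.val))
    (i : V) (x : ∀ v, A v) (x'i : A i) :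
    M i x - M i (Function.update x i x'i) =
      Ψ x - Ψ (Function.update x i x'i) := by
  have key : ∀ y : ∀ v, A v,
      Ψ y = M i y + ∑ C ∈ 𝒞.filter (fun C => ¬ i ∈ C), φ C (fun j => y j.val) := by
    intro y
    rw [hΨ, hM, Finset.sum_filter_add_sum_filter_not]
  have heq : ∀ C ∈ 𝒞.filter (fun C => ¬ i ∈ C),
      φ C (fun j => Function.update x i x'i j.val) = φ C (fun j => x j.val) := by
    intro C hC
    simp only [Finset.mem_filter] at hC
    congr 1
    funext j
    exact Function.update_of_ne (fun h : j.val = i => hC.2 (h ▸ j.2)) _ _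
  rw [key x, key (Function.update x i x'i), Finset.sum_congr rfl heq]
  ring
end

section
/- A distribution Q on A is a correlated equilibrium of the MRF-induced game if and only if the clique-marginal conditions hold: for all i ∈ V and all x_i, x'_i ∈ A_i, Σ_{C∈𝒞 : i∈C} Σ_{x_{C∖{i}}} Q_C(x_i, x_{C∖{i}}) φ_C(x_i, x_{C∖{i}}) ≥ Σ_{C∈𝒞 : i∈C} Σ_{x_{C∖{i}}} Q_C(x_i, x_{C∖{i}}) φ_C(x'_i, x_{C∖{i}}), where Q_C denotes the marginal of Q on the coordinates in C. In particular, the correlated-equilibrium conditions depend on Q only through its clique marginals {Q_C : C ∈ 𝒞}. -/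
open Finset

lemma key_sum {V : Type*} [Fintype V] [DecidableEq V]
    {A : V → Type*} [∀ v, Fintype (A v)] [∀ v, DecidableEq (A v)]
    (C : Finset V) (i : V) (h : i ∈ C) (xi : A i)
    (Q : (∀ v, A v) → ℝ) (g : ((j : {v // v ∈ C}) → A j.val) → ℝ) :
    ∑ y ∈ Finset.univ.filter (fun y : (j : {v // v ∈ C}) → A j.val => y ⟨i, h⟩ = xi),
      (∑ x ∈ Finset.univ.filter (fun x : ∀ v, A v => (fun j : {v // v ∈ C} => x j.val) = y), Q x) * g y
    = ∑ x ∈ Finset.univ.filter (fun x : ∀ v, A v => x i = xi), Q x * g (fun j => x j.val) := by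
  rw [← Finset.sum_fiberwise_of_maps_to
    (g := fun x : ∀ v, A v => (fun j : {v // v ∈ C} => x j.val))
    (t := Finset.univ.filter (fun y : (j : {v // v ∈ C}) → A j.val => y ⟨i, h⟩ = xi))
    (f := fun x => Q x * g (fun j => x j.val))
    (fun x hx => by simpa using (Finset.mem_filter.mp hx).2)]
  refine Finset.sum_congr rfl fun y hy => ?_
  have hyi : y ⟨i, h⟩ = xi := (Finset.mem_filter.mp hy).2
  have hset : (Finset.univ.filter (fun x : ∀ v, A v => x i = xi)).filter
      (fun x => (fun j : {v // v ∈ C} => x j.val) = y)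
      = Finset.univ.filter (fun x : ∀ v, A v => (fun j : {v // v ∈ C} => x j.val) = y) := by
    ext x
    simp only [Finset.mem_filter, Finset.mem_univ, true_and]
    constructor
    · rintro ⟨-, h2⟩; exact h2
    · intro h2
      refine ⟨?_, h2⟩
      have := congrFun h2 ⟨i, h⟩
      simpa [hyi] using this
  rw [Finset.sum_mul, hset]
  refine Finset.sum_congr rfl fun x hx => ?_
  have hxy : (fun j : {v // v ∈ C} => x j.val) = y := (Finset.mem_filter.mp hx).2
  rw [hxy]

lemma upd_proj {V : Type*} [DecidableEq V] {A : V → Type*} [∀ v, DecidableEq (A v)]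
    (C : Finset V) (i : V) (h : i ∈ C) (x : ∀ v, A v) (x'i : A i) :
    (fun j : {v // v ∈ C} => Function.update x i x'i j.val)
      = Function.update (fun j : {v // v ∈ C} => x j.val) ⟨i, h⟩ x'i := by
  funext j
  rcases j with ⟨v, hv⟩
  by_cases hvi : v = i
  · subst hvi
    simp
  · rw [Function.update_of_ne hvi,
      Function.update_of_ne (by simp [Subtype.ext_iff, hvi])]

lemma main_eq {V : Type*} [Fintype V] [DecidableEq V]
    {A : V → Type*} [∀ v, Fintype (A v)] [∀ v, DecidableEq (A v)]
    (𝒞 : Finset (Finset V))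
    (φ : (C : Finset V) → ((j : {v // v ∈ C}) → A j.val) → ℝ)
    (M : V → (∀ v, A v) → ℝ)
    (hM : ∀ i x, M i x = ∑ C ∈ 𝒞.filter (fun C => i ∈ C), φ C (fun j => x j.val))
    (Q : (∀ v, A v) → ℝ)
    (Qm : (C : Finset V) → ((j : {v // v ∈ C}) → A j.val) → ℝ)
    (hQm : ∀ (C : Finset V) (y : (j : {v // v ∈ C}) → A j.val),
      Qm C y = ∑ x ∈ Finset.univ.filter
        (fun x : ∀ v, A v => (fun j : {v // v ∈ C} => x j.val) = y), Q x)
    (i : V) (xi x'i : A i) :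
    (∑ C ∈ 𝒞, if h : i ∈ C then
        ∑ y ∈ Finset.univ.filter
            (fun y : (j : {v // v ∈ C}) → A j.val => y ⟨i, h⟩ = xi),
          Qm C y * φ C (Function.update y ⟨i, h⟩ x'i)
      else 0)
    = ∑ x ∈ Finset.univ.filter (fun x : ∀ v, A v => x i = xi),
        Q x * M i (Function.update x i x'i) := by
  have rhs_eq : ∑ x ∈ Finset.univ.filter (fun x : ∀ v, A v => x i = xi),
        Q x * M i (Function.update x i x'i)
      = ∑ C ∈ 𝒞.filter (fun C => i ∈ C),
          ∑ x ∈ Finset.univ.filter (fun x : ∀ v, A v => x i = xi),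
            Q x * φ C (fun j : {v // v ∈ C} => Function.update x i x'i j.val) := by
    rw [Finset.sum_comm]
    refine Finset.sum_congr rfl fun x hx => ?_
    rw [hM, Finset.mul_sum]
  rw [rhs_eq, Finset.sum_filter]
  refine Finset.sum_congr rfl fun C hC => ?_
  by_cases h : i ∈ C
  · rw [dif_pos h, if_pos h]
    have := key_sum C i h xi Q
      (fun y => φ C (Function.update y ⟨i, h⟩ x'i))
    simp only [← hQm] at this
    rw [this]
    refine Finset.sum_congr rfl fun x hx => ?_
    rw [upd_proj C i h x x'i]
  · rw [dif_neg h, if_neg h]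
lemma unchanged_eq {V : Type*} [Fintype V] [DecidableEq V]
    {A : V → Type*} [∀ v, Fintype (A v)] [∀ v, DecidableEq (A v)]
    (𝒞 : Finset (Finset V))
    (φ : (C : Finset V) → ((j : {v // v ∈ C}) → A j.val) → ℝ)
    (M : V → (∀ v, A v) → ℝ)
    (hM : ∀ i x, M i x = ∑ C ∈ 𝒞.filter (fun C => i ∈ C), φ C (fun j => x j.val))
    (Q : (∀ v, A v) → ℝ)
    (Qm : (C : Finset V) → ((j : {v // v ∈ C}) → A j.val) → ℝ)
    (hQm : ∀ (C : Finset V) (y : (j : {v // v ∈ C}) → A j.val),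
      Qm C y = ∑ x ∈ Finset.univ.filter
        (fun x : ∀ v, A v => (fun j : {v // v ∈ C} => x j.val) = y), Q x)
    (i : V) (xi : A i) :
    (∑ C ∈ 𝒞, if h : i ∈ C then
        ∑ y ∈ Finset.univ.filter
            (fun y : (j : {v // v ∈ C}) → A j.val => y ⟨i, h⟩ = xi),
          Qm C y * φ C y
      else 0)
    = ∑ x ∈ Finset.univ.filter (fun x : ∀ v, A v => x i = xi), Q x * M i x := by
  have e1 : (∑ C ∈ 𝒞, if h : i ∈ C then
        ∑ y ∈ Finset.univ.filter
            (fun y : (j : {v // v ∈ C}) → A j.val => y ⟨i, h⟩ = xi),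
          Qm C y * φ C y
      else 0)
      = (∑ C ∈ 𝒞, if h : i ∈ C then
        ∑ y ∈ Finset.univ.filter
            (fun y : (j : {v // v ∈ C}) → A j.val => y ⟨i, h⟩ = xi),
          Qm C y * φ C (Function.update y ⟨i, h⟩ xi)
      else 0) := by
    refine Finset.sum_congr rfl fun C hC => ?_
    by_cases h : i ∈ C
    · rw [dif_pos h, dif_pos h]
      refine Finset.sum_congr rfl fun y hy => ?_
      have hyi : y ⟨i, h⟩ = xi := (Finset.mem_filter.mp hy).2
      rw [← hyi, Function.update_eq_self]
    · rw [dif_neg h, dif_neg h]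
  rw [e1, main_eq 𝒞 φ M hM Q Qm hQm i xi xi]
  refine Finset.sum_congr rfl fun x hx => ?_
  have hxi : x i = xi := (Finset.mem_filter.mp hx).2
  rw [← hxi, Function.update_eq_self]

/-- A distribution `Q` on the joint action space is a correlated
equilibrium of the MRF-induced game iff the clique-marginal conditions hold; in
particular, the CE conditions depend on `Q` only through its clique marginals. -/
theorem ce_iff_clique_marginal_conditions
    {V : Type*} [Fintype V] [DecidableEq V]
    {A : V → Type*} [∀ v, Fintype (A v)] [∀ v, DecidableEq (A v)] [∀ v, Nonempty (A v)]
    (𝒞 : Finset (Finset V))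
    (φ : (C : Finset V) → ((j : {v // v ∈ C}) → A j.val) → ℝ)
    (M : V → (∀ v, A v) → ℝ)
    (hM : ∀ i x, M i x = ∑ C ∈ 𝒞.filter (fun C => i ∈ C), φ C (fun j => x j.val))
    (Q : (∀ v, A v) → ℝ)
    (hQ0 : ∀ x, 0 ≤ Q x) (hQ1 : ∑ x : ∀ v, A v, Q x = 1)
    (Qm : (C : Finset V) → ((j : {v // v ∈ C}) → A j.val) → ℝ)
    (hQm : ∀ (C : Finset V) (y : (j : {v // v ∈ C}) → A j.val),
      Qm C y = ∑ x ∈ Finset.univ.filter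
        (fun x : ∀ v, A v => (fun j : {v // v ∈ C} => x j.val) = y), Q x) :
    -- correlated equilibrium of the MRF-induced game
    (∀ (i : V) (xi x'i : A i),
        ∑ x ∈ Finset.univ.filter (fun x : ∀ v, A v => x i = xi),
            Q x * M i (Function.update x i x'i) ≤
          ∑ x ∈ Finset.univ.filter (fun x : ∀ v, A v => x i = xi), Q x * M i x) ↔
    -- clique-marginal conditions
    (∀ (i : V) (xi x'i : A i),
        (∑ C ∈ 𝒞, if h : i ∈ C then
            ∑ y ∈ Finset.univ.filter
                (fun y : (j : {v // v ∈ C}) → A j.val => y ⟨i, h⟩ = xi),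
              Qm C y * φ C (Function.update y ⟨i, h⟩ x'i)
          else 0) ≤
        (∑ C ∈ 𝒞, if h : i ∈ C then
            ∑ y ∈ Finset.univ.filter
                (fun y : (j : {v // v ∈ C}) → A j.val => y ⟨i, h⟩ = xi),
              Qm C y * φ C y
          else 0)) := by
  constructor
  · intro H i xi x'i
    rw [main_eq 𝒞 φ M hM Q Qm hQm i xi x'i, unchanged_eq 𝒞 φ M hM Q Qm hQm i xi]
    exact H i xi x'i
  · intro H i xi x'i
    rw [← main_eq 𝒞 φ M hM Q Qm hQm i xi x'i, ← unchanged_eq 𝒞 φ M hM Q Qm hQm i xi]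
    exact H i xi x'i
end

section
/- If Q is a correlated equilibrium of the MRF-induced game, then for every player i ∈ V and every distribution Q'_i on A_i: KL(Q ∥ P) + (H(Q) − H(Q_{-i})) ≤ KL(Q'_i Q_{-i} ∥ P) + H(Q'_i), where H(Q) − H(Q_{-i}) is the conditional entropy of coordinate i given the remaining coordinates under Q. -/
open Finset

/-- Extend a partial assignment on the coordinates other than `i` by the value `a`
at coordinate `i`. -/
noncomputable def extendAt {V : Type*} [DecidableEq V] {A : V → Type*} (i : V)
    (a : A i) (y : (j : {v : V // v ≠ i}) → A j.val) : ∀ v, A v :=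
  fun v => if h : v = i then cast (congrArg A h).symm a else y ⟨v, h⟩

section Aux

variable {V : Type*} [DecidableEq V] {A : V → Type*}

@[simp] lemma extendAt_same (i : V) (a : A i) (y : (j : {v : V // v ≠ i}) → A j.val) :
    extendAt i a y i = a := by simp [extendAt]

@[simp] lemma extendAt_ne (i : V) (a : A i) (y : (j : {v : V // v ≠ i}) → A j.val)
    (j : {v : V // v ≠ i}) : extendAt i a y j.val = y j := by
  simp [extendAt, j.prop]

lemma update_eq_extendAt (i : V) (x : ∀ v, A v) (a : A i) :
    Function.update x i a = extendAt i a (fun j => x j.val) := by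
  funext v
  by_cases h : v = i
  · subst h; simp [extendAt]
  · simp [extendAt, h, Function.update_of_ne h]

lemma update_extendAt (i : V) (a b : A i) (y : (j : {v : V // v ≠ i}) → A j.val) :
    Function.update (extendAt i b y) i a = extendAt i a y := by
  funext v
  by_cases h : v = i
  · subst h; simp
  · rw [Function.update_of_ne h]
    show extendAt i b y v = extendAt i a y v
    simp [extendAt, h]

variable [Fintype V] [∀ v, Fintype (A v)] [∀ v, DecidableEq (A v)]

noncomputable def splitEquiv (i : V) :
    (A i × ((j : {v : V // v ≠ i}) → A j.val)) ≃ (∀ v, A v) where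
  toFun p := extendAt i p.1 p.2
  invFun x := (x i, fun j => x j.val)
  left_inv := by
    rintro ⟨a, y⟩
    refine Prod.ext ?_ ?_
    · exact extendAt_same i a y
    · funext j; exact extendAt_ne i a y j
  right_inv := by
    intro x
    show extendAt i (x i) (fun j => x j.val) = x
    rw [← update_eq_extendAt]
    exact Function.update_eq_self i x

set_option linter.unusedSectionVars false in
lemma sum_split (i : V) (f : (∀ v, A v) → ℝ) :
    ∑ x : ∀ v, A v, f x
      = ∑ a : A i, ∑ y : (j : {v : V // v ≠ i}) → A j.val, f (extendAt i a y) := by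
  rw [← Equiv.sum_comp (splitEquiv (A := A) i) f, Fintype.sum_prod_type]
  rfl

end Aux

lemma kl_expand {α : Type*} [Fintype α] [Nonempty α] (Ψ : α → ℝ) (Z : ℝ)
    (hZ : Z = ∑ x : α, Real.exp (Ψ x)) (P : α → ℝ) (hP : ∀ x, P x = Real.exp (Ψ x) / Z)
    (R : α → ℝ) (hR0 : ∀ x, 0 ≤ R x) (hR1 : ∑ x : α, R x = 1) :
    ∑ x : α, R x * Real.log (R x / P x)
      = (∑ x : α, R x * Real.log (R x)) - (∑ x : α, R x * Ψ x) + Real.log Z := by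
  have hZpos : 0 < Z := by
    rw [hZ]; exact Finset.sum_pos (fun x _ => Real.exp_pos _) univ_nonempty
  have key : ∀ x : α, R x * Real.log (R x / P x)
      = R x * Real.log (R x) - R x * Ψ x + R x * Real.log Z := by
    intro x
    rcases eq_or_lt_of_le (hR0 x) with h | h
    · simp [← h]
    · have hPx : P x ≠ 0 := by
        rw [hP]; exact div_ne_zero (Real.exp_ne_zero _) (ne_of_gt hZpos)
      rw [Real.log_div (ne_of_gt h) hPx, hP,
        Real.log_div (Real.exp_ne_zero _) (ne_of_gt hZpos), Real.log_exp]
      ring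
  rw [Finset.sum_congr rfl (fun x _ => key x)]
  rw [Finset.sum_add_distrib, Finset.sum_sub_distrib, ← Finset.sum_mul, hR1, one_mul]

lemma prod_log_split {α β : Type*} [Fintype α] [Fintype β]
    (f : α → ℝ) (g : β → ℝ) (hf0 : ∀ a, 0 ≤ f a) (hg0 : ∀ b, 0 ≤ g b)
    (hf1 : ∑ a : α, f a = 1) (hg1 : ∑ b : β, g b = 1) :
    ∑ a : α, ∑ b : β, (f a * g b) * Real.log (f a * g b)
      = (∑ a : α, f a * Real.log (f a)) + (∑ b : β, g b * Real.log (g b)) := by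
  have key : ∀ a b, (f a * g b) * Real.log (f a * g b)
      = g b * (f a * Real.log (f a)) + f a * (g b * Real.log (g b)) := by
    intro a b
    rcases eq_or_lt_of_le (hf0 a) with h | h
    · simp [← h]
    rcases eq_or_lt_of_le (hg0 b) with h' | h'
    · simp [← h']
    rw [Real.log_mul (ne_of_gt h) (ne_of_gt h')]
    ring
  have h1 : ∀ a : α, ∑ b : β, g b * (f a * Real.log (f a)) = f a * Real.log (f a) := by
    intro a; rw [← Finset.sum_mul, hg1, one_mul]
  have h2 : ∀ a : α, ∑ b : β, f a * (g b * Real.log (g b))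
      = f a * ∑ b : β, g b * Real.log (g b) := fun a => (Finset.mul_sum _ _ _).symm
  simp only [key, Finset.sum_add_distrib, h1, h2]
  rw [← Finset.sum_mul, hf1, one_mul]


/-- If `Q` is a correlated equilibrium of the MRF-induced game,
then for every player `i` and every distribution `Q'i` on `A i`:
`KL(Q ∥ P) + (H(Q) − H(Q₋ᵢ)) ≤ KL(Q'i ⊗ Q₋ᵢ ∥ P) + H(Q'i)`. -/
theorem ce_kl_conditional_entropy_bound
    {V : Type*} [Fintype V] [DecidableEq V]
    {A : V → Type*} [∀ v, Fintype (A v)] [∀ v, DecidableEq (A v)] [∀ v, Nonempty (A v)]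
    (𝒞 : Finset (Finset V))
    (φ : (C : Finset V) → ((j : {v // v ∈ C}) → A j.val) → ℝ)
    (Ψ : (∀ v, A v) → ℝ)
    (hΨ : ∀ x, Ψ x = ∑ C ∈ 𝒞, φ C (fun j => x j.val))
    (M : V → (∀ v, A v) → ℝ)
    (hM : ∀ i x, M i x = ∑ C ∈ 𝒞.filter (fun C => i ∈ C), φ C (fun j => x j.val))
    (Z : ℝ) (hZ : Z = ∑ x : ∀ v, A v, Real.exp (Ψ x))
    (P : (∀ v, A v) → ℝ) (hP : ∀ x, P x = Real.exp (Ψ x) / Z)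
    (Q : (∀ v, A v) → ℝ)
    (hQ0 : ∀ x, 0 ≤ Q x) (hQ1 : ∑ x : ∀ v, A v, Q x = 1)
    (hCE : ∀ (i : V) (xi x'i : A i),
      ∑ x ∈ Finset.univ.filter (fun x : ∀ v, A v => x i = xi),
          Q x * M i (Function.update x i x'i) ≤
        ∑ x ∈ Finset.univ.filter (fun x : ∀ v, A v => x i = xi), Q x * M i x) :
    ∀ (i : V) (Q'i : A i → ℝ), (∀ a, 0 ≤ Q'i a) → (∑ a : A i, Q'i a = 1) →
      (∑ x : ∀ v, A v, Q x * Real.log (Q x / P x)) +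
          ((-(∑ x : ∀ v, A v, Q x * Real.log (Q x))) -
            (-(∑ y : (j : {v : V // v ≠ i}) → A j.val,
                (∑ a : A i, Q (extendAt i a y)) *
                  Real.log (∑ a : A i, Q (extendAt i a y))))) ≤
        (∑ x : ∀ v, A v,
            (Q'i (x i) * ∑ a : A i, Q (Function.update x i a)) *
              Real.log ((Q'i (x i) * ∑ a : A i, Q (Function.update x i a)) / P x)) +
          (-(∑ a : A i, Q'i a * Real.log (Q'i a))) := by
  intro i Q'i hQ'0 hQ'1
  classical
  obtain ⟨a0⟩ := (inferInstance : Nonempty (A i))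
  -- marginal facts
  have hQm0 : ∀ y : (j : {v : V // v ≠ i}) → A j.val,
      0 ≤ ∑ a : A i, Q (extendAt i a y) :=
    fun y => Finset.sum_nonneg fun a _ => hQ0 _
  have hQm1 : ∑ y : (j : {v : V // v ≠ i}) → A j.val,
      ∑ a : A i, Q (extendAt i a y) = 1 := by
    rw [Finset.sum_comm, ← sum_split i Q, hQ1]
  -- the product distribution, rewritten along the split
  have hRval : ∀ (a : A i) (y : (j : {v : V // v ≠ i}) → A j.val),
      Q'i (extendAt i a y i) * (∑ b : A i, Q (Function.update (extendAt i a y) i b))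
        = Q'i a * ∑ b : A i, Q (extendAt i b y) := by
    intro a y
    rw [extendAt_same]
    congr 1
    exact Finset.sum_congr rfl fun b _ => by rw [update_extendAt]
  have hR0 : ∀ x : ∀ v, A v,
      0 ≤ Q'i (x i) * ∑ a : A i, Q (Function.update x i a) :=
    fun x => mul_nonneg (hQ'0 _) (Finset.sum_nonneg fun a _ => hQ0 _)
  have hR1 : ∑ x : ∀ v, A v, Q'i (x i) * ∑ a : A i, Q (Function.update x i a) = 1 := by
    rw [sum_split i (fun x => Q'i (x i) * ∑ a : A i, Q (Function.update x i a))]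
    simp only [hRval]
    simp only [← Finset.mul_sum]
    rw [hQm1]
    simp only [mul_one]
    exact hQ'1
  -- KL expansions
  have hE1 : ∑ x : ∀ v, A v, Q x * Real.log (Q x / P x)
      = (∑ x : ∀ v, A v, Q x * Real.log (Q x)) - (∑ x : ∀ v, A v, Q x * Ψ x)
        + Real.log Z :=
    kl_expand Ψ Z hZ P hP Q hQ0 hQ1
  have hE2 : ∑ x : ∀ v, A v,
        (Q'i (x i) * ∑ a : A i, Q (Function.update x i a)) *
          Real.log ((Q'i (x i) * ∑ a : A i, Q (Function.update x i a)) / P x)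
      = (∑ x : ∀ v, A v,
            (Q'i (x i) * ∑ a : A i, Q (Function.update x i a)) *
              Real.log (Q'i (x i) * ∑ a : A i, Q (Function.update x i a)))
        - (∑ x : ∀ v, A v,
            (Q'i (x i) * ∑ a : A i, Q (Function.update x i a)) * Ψ x)
        + Real.log Z :=
    kl_expand Ψ Z hZ P hP _ hR0 hR1
  -- splitting the entropy of the product distribution
  have hsplitR : ∑ x : ∀ v, A v,
        (Q'i (x i) * ∑ a : A i, Q (Function.update x i a)) *
          Real.log (Q'i (x i) * ∑ a : A i, Q (Function.update x i a))
      = (∑ a : A i, Q'i a * Real.log (Q'i a))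
        + ∑ y : (j : {v : V // v ≠ i}) → A j.val,
            (∑ a : A i, Q (extendAt i a y)) *
              Real.log (∑ a : A i, Q (extendAt i a y)) := by
    rw [sum_split i (fun x =>
      (Q'i (x i) * ∑ a : A i, Q (Function.update x i a)) *
        Real.log (Q'i (x i) * ∑ a : A i, Q (Function.update x i a)))]
    simp only [hRval]
    exact prod_log_split Q'i (fun y => ∑ a : A i, Q (extendAt i a y)) hQ'0 hQm0 hQ'1 hQm1
  -- potential decomposition
  have hgy : ∀ (a : A i) (y : (j : {v : V // v ≠ i}) → A j.val),
      Ψ (extendAt i a y)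
        = M i (extendAt i a y)
          + (Ψ (extendAt i a0 y) - M i (extendAt i a0 y)) := by
    intro a y
    have hsplit : ∀ (x : ∀ v, A v),
        Ψ x - M i x = ∑ C ∈ 𝒞.filter (fun C => ¬ i ∈ C), φ C (fun j => x j.val) := by
      intro x
      rw [hΨ, hM, ← Finset.sum_filter_add_sum_filter_not 𝒞 (fun C => i ∈ C)
          (fun C => φ C (fun j => x j.val))]
      ring
    have h2 : Ψ (extendAt i a y) - M i (extendAt i a y)
        = Ψ (extendAt i a0 y) - M i (extendAt i a0 y) := by
      rw [hsplit, hsplit]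
      refine Finset.sum_congr rfl fun C hC => ?_
      have hiC : i ∉ C := by
        have := (Finset.mem_filter.mp hC).2
        simpa using this
      congr 1
      funext j
      have hj : (j.val : V) ≠ i := fun h => hiC (h ▸ j.prop)
      calc extendAt i a y j.val = y ⟨j.val, hj⟩ := by simp [extendAt, hj]
        _ = extendAt i a0 y j.val := by simp [extendAt, hj]
    linarith
  -- decompose the two energy terms
  have hEdecomp : (∑ x : ∀ v, A v, Q x * Ψ x)
      = (∑ x : ∀ v, A v, Q x * M i x)
        + ∑ y : (j : {v : V // v ≠ i}) → A j.val,
            (∑ a : A i, Q (extendAt i a y)) *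
              (Ψ (extendAt i a0 y) - M i (extendAt i a0 y)) := by
    rw [sum_split i (fun x => Q x * Ψ x), sum_split i (fun x => Q x * M i x)]
    have key : ∀ (a : A i) (y : (j : {v : V // v ≠ i}) → A j.val),
        Q (extendAt i a y) * Ψ (extendAt i a y)
          = Q (extendAt i a y) * M i (extendAt i a y)
            + Q (extendAt i a y) * (Ψ (extendAt i a0 y) - M i (extendAt i a0 y)) := by
      intro a y; rw [hgy a y]; ring
    simp only [key, Finset.sum_add_distrib]
    congr 1
    rw [Finset.sum_comm]
    exact Finset.sum_congr rfl fun y _ => (Finset.sum_mul _ _ _).symm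
  have hE'decomp : (∑ x : ∀ v, A v,
        (Q'i (x i) * ∑ a : A i, Q (Function.update x i a)) * Ψ x)
      = (∑ a : A i, Q'i a *
            ∑ y : (j : {v : V // v ≠ i}) → A j.val,
              (∑ b : A i, Q (extendAt i b y)) * M i (extendAt i a y))
        + ∑ y : (j : {v : V // v ≠ i}) → A j.val,
            (∑ a : A i, Q (extendAt i a y)) *
              (Ψ (extendAt i a0 y) - M i (extendAt i a0 y)) := by
    rw [sum_split i (fun x =>
      (Q'i (x i) * ∑ a : A i, Q (Function.update x i a)) * Ψ x)]
    have key : ∀ (a : A i) (y : (j : {v : V // v ≠ i}) → A j.val),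
        (Q'i (extendAt i a y i) * ∑ b : A i, Q (Function.update (extendAt i a y) i b)) *
            Ψ (extendAt i a y)
          = Q'i a * ((∑ b : A i, Q (extendAt i b y)) * M i (extendAt i a y))
            + Q'i a * ((∑ b : A i, Q (extendAt i b y)) *
                (Ψ (extendAt i a0 y) - M i (extendAt i a0 y))) := by
      intro a y; rw [hRval, hgy a y]; ring
    simp only [key, Finset.sum_add_distrib]
    congr 1
    · exact Finset.sum_congr rfl fun a _ => (Finset.mul_sum _ _ _).symm
    · rw [Finset.sum_comm]
      refine Finset.sum_congr rfl fun y _ => ?_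
      rw [← Finset.sum_mul, hQ'1, one_mul]
  -- correlated-equilibrium consequence
  have hfiber : ∀ (g : (∀ v, A v) → ℝ),
      ∑ xi : A i, ∑ x ∈ Finset.univ.filter (fun x : ∀ v, A v => x i = xi), g x
        = ∑ x : ∀ v, A v, g x :=
    fun g => Finset.sum_fiberwise_of_maps_to (fun x _ => Finset.mem_univ _) g
  have hCEb : ∀ b : A i,
      (∑ y : (j : {v : V // v ≠ i}) → A j.val,
          (∑ a : A i, Q (extendAt i a y)) * M i (extendAt i b y))
        ≤ ∑ x : ∀ v, A v, Q x * M i x := by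
    intro b
    have h1 : ∑ x : ∀ v, A v, Q x * M i (Function.update x i b)
        ≤ ∑ x : ∀ v, A v, Q x * M i x := by
      rw [← hfiber (fun x => Q x * M i (Function.update x i b)),
        ← hfiber (fun x => Q x * M i x)]
      exact Finset.sum_le_sum fun xi _ => hCE i xi b
    have h2 : ∑ x : ∀ v, A v, Q x * M i (Function.update x i b)
        = ∑ y : (j : {v : V // v ≠ i}) → A j.val,
            (∑ a : A i, Q (extendAt i a y)) * M i (extendAt i b y) := by
      rw [sum_split i (fun x => Q x * M i (Function.update x i b))]
      have key : ∀ (a : A i) (y : (j : {v : V // v ≠ i}) → A j.val),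
          Q (extendAt i a y) * M i (Function.update (extendAt i a y) i b)
            = Q (extendAt i a y) * M i (extendAt i b y) :=
        fun a y => by rw [update_extendAt]
      simp only [key]
      rw [Finset.sum_comm]
      exact Finset.sum_congr rfl fun y _ => (Finset.sum_mul _ _ _).symm
    rw [h2] at h1
    exact h1
  have hE'le : (∑ x : ∀ v, A v,
        (Q'i (x i) * ∑ a : A i, Q (Function.update x i a)) * Ψ x)
      ≤ ∑ x : ∀ v, A v, Q x * Ψ x := by
    rw [hE'decomp, hEdecomp]
    have h3 : ∑ a : A i, Q'i a *
          ∑ y : (j : {v : V // v ≠ i}) → A j.val,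
            (∑ b : A i, Q (extendAt i b y)) * M i (extendAt i a y)
        ≤ ∑ a : A i, Q'i a * ∑ x : ∀ v, A v, Q x * M i x :=
      Finset.sum_le_sum fun a _ => mul_le_mul_of_nonneg_left (hCEb a) (hQ'0 a)
    have h4 : ∑ a : A i, Q'i a * ∑ x : ∀ v, A v, Q x * M i x
        = ∑ x : ∀ v, A v, Q x * M i x := by
      rw [← Finset.sum_mul, hQ'1, one_mul]
    linarith
  linarith [hE1, hE2, hsplitR, hE'le]
end

section
/- If Q is a correlated equilibrium of the MRF-induced game, then for every player i ∈ V and every distribution Q'_i on A_i: KL(Q ∥ P) ≤ KL(Q'_i Q_{-i} ∥ P) + ln|A_i|. Equivalently, KL(Q ∥ P) ≤ min_i min_{Q'_i} KL(Q'_i Q_{-i} ∥ P) + ln|A_i|. -/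
open Finset Function Real

/-!
Write `R = q Q₋ᵢ` and use `KL(W ∥ P) = ∑ W log W - ∑ W Ψ + log Z` for both `Q` and `R`.
Replacing the `i`-th marginal of `Q` by `q` does not increase the expected potential: the cliques
avoiding `i` do not see the change, and on the cliques containing `i` it is a mixture of
unilateral deviations of player `i`, none of which pays off at a correlated equilibrium.
On the entropy side, `Q ≤ Q₋ᵢ` pointwise gives `∑ Q log Q ≤ ∑ Q log Q₋ᵢ = ∑ R log R - ∑ q log q`,
and `-∑ q log q ≤ log |Aᵢ|`.
-/

lemma neg_log_card_le_sum_mul_log {α : Type*} [Fintype α] {q : α → ℝ} (hq0 : ∀ a, 0 ≤ q a)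
    (hq1 : ∑ a, q a = 1) : -log (Fintype.card α) ≤ ∑ a, q a * log (q a) := by
  obtain ⟨a, -, -⟩ := exists_ne_zero_of_sum_ne_zero (hq1.trans_ne one_ne_zero)
  have hn : (0 : ℝ) < Fintype.card α := by exact_mod_cast Fintype.card_pos_iff.2 ⟨a⟩
  have jensen := concaveOn_negMulLog.le_map_sum (t := univ) (p := q)
    (w := fun _ => (Fintype.card α : ℝ)⁻¹) (fun _ _ => by positivity)
    (by simp [hn.ne']) (fun a _ => hq0 a)
  simp only [smul_eq_mul, ← mul_sum, hq1, mul_one, negMulLog, log_inv, neg_mul, mul_neg,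
    neg_neg, sum_neg_distrib] at jensen
  rw [← mul_neg] at jensen
  linarith [le_of_mul_le_mul_left jensen (inv_pos.2 hn)]

lemma sum_mul_log_div_gibbs {α : Type*} [Fintype α] (Ψ : α → ℝ) {W : α → ℝ}
    (hW : ∑ x, W x = 1) :
    ∑ x, W x * log (W x / (exp (Ψ x) / ∑ y, exp (Ψ y)))
      = ∑ x, W x * log (W x) - ∑ x, W x * Ψ x + log (∑ y, exp (Ψ y)) := by
  have pointwise : ∀ x, W x * log (W x / (exp (Ψ x) / ∑ y, exp (Ψ y)))
      = W x * log (W x) - W x * Ψ x + W x * log (∑ y, exp (Ψ y)) := by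
    intro x
    rcases eq_or_ne (W x) 0 with h | h
    · simp [h]
    have hZ : 0 < ∑ y, exp (Ψ y) := sum_pos (fun y _ => exp_pos _) ⟨x, mem_univ x⟩
    rw [log_div h (by positivity), log_div (exp_ne_zero _) hZ.ne', log_exp]
    ring
  rw [sum_congr rfl fun x _ => pointwise x, sum_add_distrib, sum_sub_distrib, ← sum_mul, hW,
    one_mul]

section Marginal

variable {ι : Type*} [DecidableEq ι] {A : ι → Type*} [∀ i, Fintype (A i)]

/-- `marginalExcept i Q x` is `Q₋ᵢ(x₋ᵢ)`, and `withMarginal i q Q` is the product `q Q₋ᵢ`. -/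
def marginalExcept (i : ι) (Q : (∀ i, A i) → ℝ) (x : ∀ i, A i) : ℝ :=
  ∑ a, Q (update x i a)

def withMarginal (i : ι) (q : A i → ℝ) (Q : (∀ i, A i) → ℝ) (x : ∀ i, A i) : ℝ :=
  q (x i) * marginalExcept i Q x

variable {i : ι}

lemma marginalExcept_update (Q : (∀ i, A i) → ℝ) (x : ∀ i, A i) (a : A i) :
    marginalExcept i Q (update x i a) = marginalExcept i Q x := by
  simp [marginalExcept]

lemma le_marginalExcept {Q : (∀ i, A i) → ℝ} (hQ0 : ∀ x, 0 ≤ Q x) (x : ∀ i, A i) :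
    Q x ≤ marginalExcept i Q x := by
  simpa [marginalExcept] using single_le_sum (fun a _ => hQ0 (update x i a)) (mem_univ (x i))

variable [Fintype ι]

lemma sum_sum_update_swap (H : (∀ i, A i) → (∀ i, A i) → ℝ) :
    ∑ x, ∑ a : A i, H x (update x i a) = ∑ y, ∑ b : A i, H (update y i b) y := by
  let e : Equiv.Perm ((∀ i, A i) × A i) :=
    Involutive.toPerm (fun p => (update p.1 i p.2, p.1 i)) fun p => by simp
  simp only [← Fintype.sum_prod_type']
  exact Fintype.sum_equiv e _ _ fun p => by simp [e, Involutive.toPerm]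

lemma sum_mul_log_le_sum_mul_log_marginalExcept {Q : (∀ i, A i) → ℝ} (hQ0 : ∀ x, 0 ≤ Q x) :
    ∑ x, Q x * log (Q x) ≤ ∑ x, Q x * log (marginalExcept i Q x) := by
  refine sum_le_sum fun x _ => ?_
  rcases (hQ0 x).eq_or_lt with h | h
  · simp [← h]
  · exact mul_le_mul_of_nonneg_left (log_le_log h (le_marginalExcept hQ0 x)) h.le

lemma sum_withMarginal_mul (q : A i → ℝ) (Q F : (∀ i, A i) → ℝ) :
    ∑ x, withMarginal i q Q x * F x = ∑ b, q b * ∑ x, Q x * F (update x i b) := by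
  calc ∑ x, withMarginal i q Q x * F x = ∑ x, ∑ a, q (x i) * Q (update x i a) * F x := by
        simp only [withMarginal, marginalExcept, mul_sum, sum_mul]
    _ = ∑ y, ∑ b, q b * Q y * F (update y i b) := by
        simpa using sum_sum_update_swap (i := i) fun x y => q (x i) * Q y * F x
    _ = ∑ b, q b * ∑ x, Q x * F (update x i b) := by
        rw [sum_comm]
        simp only [mul_sum, mul_assoc]

lemma sum_withMarginal_mul_of_update_eq (q : A i → ℝ) (Q : (∀ i, A i) → ℝ)
    {G : (∀ i, A i) → ℝ} (hG : ∀ x a, G (update x i a) = G x) :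
    ∑ x, withMarginal i q Q x * G x = (∑ b, q b) * ∑ x, Q x * G x := by
  simp only [sum_withMarginal_mul, hG, sum_mul]

lemma sum_withMarginal (q : A i → ℝ) (Q : (∀ i, A i) → ℝ) :
    ∑ x, withMarginal i q Q x = (∑ b, q b) * ∑ x, Q x := by
  simpa using sum_withMarginal_mul_of_update_eq q Q (G := fun _ => 1) fun _ _ => rfl

lemma sum_withMarginal_mul_log {q : A i → ℝ} {Q : (∀ i, A i) → ℝ} (hq1 : ∑ b, q b = 1)
    (hQ1 : ∑ x, Q x = 1) :
    ∑ x, withMarginal i q Q x * log (withMarginal i q Q x)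
      = ∑ b, q b * log (q b) + ∑ x, Q x * log (marginalExcept i Q x) := by
  have pointwise : ∀ x, withMarginal i q Q x * log (withMarginal i q Q x)
      = withMarginal i (fun b => q b * log (q b)) Q x
        + withMarginal i q Q x * log (marginalExcept i Q x) := by
    intro x
    have := negMulLog_mul (q (x i)) (marginalExcept i Q x)
    simp only [negMulLog] at this
    simp only [withMarginal]
    linarith
  rw [sum_congr rfl fun x _ => pointwise x, sum_add_distrib, sum_withMarginal,
    sum_withMarginal_mul_of_update_eq q Q fun x a => by rw [marginalExcept_update], hq1, hQ1,
    mul_one, one_mul]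

lemma sum_mul_update_le_of_fiberwise [∀ i, DecidableEq (A i)] {Q F : (∀ i, A i) → ℝ}
    (h : ∀ xi b : A i,
      ∑ x with x i = xi, Q x * F (update x i b) ≤ ∑ x with x i = xi, Q x * F x) (b : A i) :
    ∑ x, Q x * F (update x i b) ≤ ∑ x, Q x * F x := by
  rw [← sum_fiberwise univ (fun x : ∀ i, A i => x i),
    ← sum_fiberwise univ (fun x : ∀ i, A i => x i)]
  exact sum_le_sum fun xi _ => h xi b

lemma sum_withMarginal_mul_le {q : A i → ℝ} (hq0 : ∀ b, 0 ≤ q b) (hq1 : ∑ b, q b = 1)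
    {Q F G : (∀ i, A i) → ℝ} (hF : ∀ b, ∑ x, Q x * F (update x i b) ≤ ∑ x, Q x * F x)
    (hGF : ∀ x a, G (update x i a) - F (update x i a) = G x - F x) :
    ∑ x, withMarginal i q Q x * G x ≤ ∑ x, Q x * G x := by
  have split : ∀ W : (∀ i, A i) → ℝ,
      ∑ x, W x * G x = ∑ x, W x * F x + ∑ x, W x * (G x - F x) := fun W => by
    rw [← sum_add_distrib]
    simp only [mul_sub, add_sub_cancel]
  rw [split, split Q, sum_withMarginal_mul_of_update_eq q Q (G := fun x => G x - F x) hGF,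
    hq1, one_mul, sum_withMarginal_mul, add_le_add_iff_right]
  calc ∑ b, q b * ∑ x, Q x * F (update x i b) ≤ ∑ b, q b * ∑ x, Q x * F x :=
        sum_le_sum fun b _ => mul_le_mul_of_nonneg_left (hF b) (hq0 b)
    _ = ∑ x, Q x * F x := by rw [← sum_mul, hq1, one_mul]

end Marginal

section GibbsPotential

variable {ι : Type*} [DecidableEq ι] {A : ι → Type*} (𝒞 : Finset (Finset ι))
  (φ : (C : Finset ι) → ((j : {v // v ∈ C}) → A j.val) → ℝ)

def gibbsPotential (x : ∀ i, A i) : ℝ :=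
  ∑ C ∈ 𝒞, φ C fun j => x j.val

def cliquePayoff (i : ι) (x : ∀ i, A i) : ℝ :=
  ∑ C ∈ 𝒞 with i ∈ C, φ C fun j => x j.val

lemma gibbsPotential_sub_cliquePayoff_update (i : ι) (x : ∀ i, A i) (a : A i) :
    gibbsPotential 𝒞 φ (update x i a) - cliquePayoff 𝒞 φ i (update x i a)
      = gibbsPotential 𝒞 φ x - cliquePayoff 𝒞 φ i x := by
  have split : ∀ y : ∀ i, A i, gibbsPotential 𝒞 φ y - cliquePayoff 𝒞 φ i y
      = ∑ C ∈ 𝒞 with i ∉ C, φ C fun j => y j.val := fun y => by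
    rw [gibbsPotential, cliquePayoff, ← sum_filter_add_sum_filter_not 𝒞 (i ∈ ·),
      add_sub_cancel_left]
  rw [split, split]
  refine sum_congr rfl fun C hC => congrArg (φ C) (funext fun j => update_of_ne ?_ _ _)
  exact fun h => (mem_filter.1 hC).2 (h ▸ j.2)

end GibbsPotential

theorem ce_kl_bound_log_card_general
    {V : Type*} [Fintype V] [DecidableEq V]
    {A : V → Type*} [∀ v, Fintype (A v)] [∀ v, DecidableEq (A v)]
    (𝒞 : Finset (Finset V))
    (φ : (C : Finset V) → ((j : {v // v ∈ C}) → A j.val) → ℝ)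
    (Ψ : (∀ v, A v) → ℝ)
    (hΨ : ∀ x, Ψ x = ∑ C ∈ 𝒞, φ C (fun j => x j.val))
    (M : V → (∀ v, A v) → ℝ)
    (hM : ∀ i x, M i x = ∑ C ∈ 𝒞.filter (fun C => i ∈ C), φ C (fun j => x j.val))
    (Z : ℝ) (hZ : Z = ∑ x : ∀ v, A v, Real.exp (Ψ x))
    (P : (∀ v, A v) → ℝ) (hP : ∀ x, P x = Real.exp (Ψ x) / Z)
    (Q : (∀ v, A v) → ℝ)
    (hQ0 : ∀ x, 0 ≤ Q x) (hQ1 : ∑ x : ∀ v, A v, Q x = 1)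
    (hCE : ∀ (i : V) (xi x'i : A i),
      ∑ x ∈ Finset.univ.filter (fun x : ∀ v, A v => x i = xi),
          Q x * M i (Function.update x i x'i) ≤
        ∑ x ∈ Finset.univ.filter (fun x : ∀ v, A v => x i = xi), Q x * M i x) :
    ∀ (i : V) (Q'i : A i → ℝ), (∀ a, 0 ≤ Q'i a) → (∑ a : A i, Q'i a = 1) →
      (∑ x : ∀ v, A v, Q x * Real.log (Q x / P x)) ≤
        (∑ x : ∀ v, A v,
            (Q'i (x i) * ∑ a : A i, Q (Function.update x i a)) *
              Real.log ((Q'i (x i) * ∑ a : A i, Q (Function.update x i a)) / P x)) +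
          Real.log (Fintype.card (A i)) := by
  intro i q hq0 hq1
  subst hZ
  obtain rfl : P = fun x => exp (Ψ x) / ∑ y, exp (Ψ y) := funext hP
  have hR1 : ∑ x, withMarginal i q Q x = 1 := by rw [sum_withMarginal, hq1, hQ1, one_mul]
  have hpotential : ∑ x, withMarginal i q Q x * Ψ x ≤ ∑ x, Q x * Ψ x :=
    sum_withMarginal_mul_le hq0 hq1 (sum_mul_update_le_of_fiberwise (hCE i)) fun x a => by
      simp only [hΨ, hM]
      exact gibbsPotential_sub_cliquePayoff_update 𝒞 φ i x a
  change _ ≤ ∑ x, withMarginal i q Q x * log (withMarginal i q Q x / _) + _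
  rw [sum_mul_log_div_gibbs Ψ hQ1, sum_mul_log_div_gibbs Ψ hR1, sum_withMarginal_mul_log hq1 hQ1]
  linarith [sum_mul_log_le_sum_mul_log_marginalExcept (i := i) hQ0,
    neg_log_card_le_sum_mul_log hq0 hq1]

/-- If `Q` is a correlated equilibrium of the MRF-induced game,
then for every player `i` and every distribution `Q'i` on `A i`:
`KL(Q ∥ P) ≤ KL(Q'i ⊗ Q₋ᵢ ∥ P) + ln |A i|`. -/
theorem ce_kl_bound_log_card
    {V : Type*} [Fintype V] [DecidableEq V]
    {A : V → Type*} [∀ v, Fintype (A v)] [∀ v, DecidableEq (A v)] [∀ v, Nonempty (A v)]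
    (𝒞 : Finset (Finset V))
    (φ : (C : Finset V) → ((j : {v // v ∈ C}) → A j.val) → ℝ)
    (Ψ : (∀ v, A v) → ℝ)
    (hΨ : ∀ x, Ψ x = ∑ C ∈ 𝒞, φ C (fun j => x j.val))
    (M : V → (∀ v, A v) → ℝ)
    (hM : ∀ i x, M i x = ∑ C ∈ 𝒞.filter (fun C => i ∈ C), φ C (fun j => x j.val))
    (Z : ℝ) (hZ : Z = ∑ x : ∀ v, A v, Real.exp (Ψ x))
    (P : (∀ v, A v) → ℝ) (hP : ∀ x, P x = Real.exp (Ψ x) / Z)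
    (Q : (∀ v, A v) → ℝ)
    (hQ0 : ∀ x, 0 ≤ Q x) (hQ1 : ∑ x : ∀ v, A v, Q x = 1)
    (hCE : ∀ (i : V) (xi x'i : A i),
      ∑ x ∈ Finset.univ.filter (fun x : ∀ v, A v => x i = xi),
          Q x * M i (Function.update x i x'i) ≤
        ∑ x ∈ Finset.univ.filter (fun x : ∀ v, A v => x i = xi), Q x * M i x) :
    ∀ (i : V) (Q'i : A i → ℝ), (∀ a, 0 ≤ Q'i a) → (∑ a : A i, Q'i a = 1) →
      (∑ x : ∀ v, A v, Q x * Real.log (Q x / P x)) ≤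
        (∑ x : ∀ v, A v,
            (Q'i (x i) * ∑ a : A i, Q (Function.update x i a)) *
              Real.log ((Q'i (x i) * ∑ a : A i, Q (Function.update x i a)) / P x)) +
          Real.log (Fintype.card (A i)) :=
  ce_kl_bound_log_card_general 𝒞 φ Ψ hΨ M hM Z hZ P hP Q hQ0 hQ1 hCE
end

section
/- If (Q_1, …, Q_n) is a mixed-strategy Nash equilibrium of the MRF-induced game and Q = ∏_j Q_j is the induced product distribution, then for every player i ∈ V: H(Q, P) = min_{Q'_i} H(Q'_i Q×_{-i}, P), the minimum being over all distributions Q'_i on A_i; in particular H(Q, P) ≤ H(Q'_i Q×_{-i}, P) for every distribution Q'_i on A_i, with equality at Q'_i = Q_i. -/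
open Finset

private lemma keyL {V : Type*} [Fintype V] [DecidableEq V]
    {A : V → Type*} [∀ v, Fintype (A v)]
    (Q : ∀ v, A v → ℝ) (i : V) (hQi : ∑ a : A i, Q i a = 1)
    (W : A i → ℝ) (g : (∀ v, A v) → ℝ) :
    ∑ x : ∀ v, A v, (W (x i) * ∏ j ∈ Finset.univ.erase i, Q j (x j)) * g x
      = ∑ a : A i, W a * ∑ x : ∀ v, A v, (∏ j, Q j (x j)) * g (Function.update x i a) := by
  classical
  set e := Equiv.piSplitAt i A with he
  have hsymm : ∀ (b : A i) (y : ∀ j : {j // j ≠ i}, A j) (j : V),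
      e.symm (b, y) j = if h : j = i then h.symm.rec b else y ⟨j, h⟩ := by
    intro b y j; rfl
  have hsymm_i : ∀ (b : A i) (y : ∀ j : {j // j ≠ i}, A j), e.symm (b, y) i = b := by
    intro b y; rw [hsymm]; simp
  have hsymm_ne : ∀ (b : A i) (y : ∀ j : {j // j ≠ i}, A j) (j : {j // j ≠ i}),
      e.symm (b, y) j.1 = y j := by
    intro b y j; rw [hsymm]; rw [dif_neg j.2]
  have hupd : ∀ (b a : A i) (y : ∀ j : {j // j ≠ i}, A j),
      Function.update (e.symm (b, y)) i a = e.symm (a, y) := by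
    intro b a y
    funext j
    by_cases h : j = i
    · subst h; rw [Function.update_self, hsymm_i]
    · rw [Function.update_of_ne h, hsymm_ne b y ⟨j, h⟩, hsymm_ne a y ⟨j, h⟩]
  have hmem : ∀ j : V, j ∈ Finset.univ.erase i ↔ j ≠ i := by
    intro j; simp [Finset.mem_erase]
  have hprod_erase : ∀ (b : A i) (y : ∀ j : {j // j ≠ i}, A j),
      ∏ j ∈ Finset.univ.erase i, Q j (e.symm (b, y) j)
        = ∏ j : {j // j ≠ i}, Q j.1 (y j) := by
    intro b y
    rw [Finset.prod_subtype (Finset.univ.erase i) hmem (fun j => Q j (e.symm (b, y) j))]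
    exact Finset.prod_congr rfl fun j _ => by rw [hsymm_ne]
  have hprod_full : ∀ (b : A i) (y : ∀ j : {j // j ≠ i}, A j),
      ∏ j, Q j (e.symm (b, y) j) = Q i b * ∏ j : {j // j ≠ i}, Q j.1 (y j) := by
    intro b y
    rw [← Finset.mul_prod_erase Finset.univ (fun j => Q j (e.symm (b, y) j)) (Finset.mem_univ i),
      hsymm_i, hprod_erase]
  calc ∑ x : ∀ v, A v, (W (x i) * ∏ j ∈ Finset.univ.erase i, Q j (x j)) * g x
      = ∑ p : A i × ∀ j : {j // j ≠ i}, A j,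
          (W (e.symm p i) * ∏ j ∈ Finset.univ.erase i, Q j (e.symm p j)) * g (e.symm p) :=
        (Equiv.sum_comp e.symm _).symm
    _ = ∑ b : A i, ∑ y : ∀ j : {j // j ≠ i}, A j,
          W b * ((∏ j : {j // j ≠ i}, Q j.1 (y j)) * g (e.symm (b, y))) := by
        rw [Fintype.sum_prod_type]
        exact Finset.sum_congr rfl fun b _ => Finset.sum_congr rfl fun y _ => by
          rw [hsymm_i, hprod_erase, mul_assoc]
    _ = ∑ a : A i, W a * ∑ y : ∀ j : {j // j ≠ i}, A j,
          (∏ j : {j // j ≠ i}, Q j.1 (y j)) * g (e.symm (a, y)) := by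
        exact Finset.sum_congr rfl fun b _ => by rw [Finset.mul_sum]
    _ = ∑ a : A i, W a * ∑ x : ∀ v, A v, (∏ j, Q j (x j)) * g (Function.update x i a) := by
        refine Finset.sum_congr rfl fun a _ => ?_
        congr 1
        calc ∑ y : ∀ j : {j // j ≠ i}, A j,
              (∏ j : {j // j ≠ i}, Q j.1 (y j)) * g (e.symm (a, y))
            = ∑ b : A i, Q i b * ∑ y : ∀ j : {j // j ≠ i}, A j,
                (∏ j : {j // j ≠ i}, Q j.1 (y j)) * g (e.symm (a, y)) := by
              rw [← Finset.sum_mul, hQi, one_mul]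
          _ = ∑ p : A i × ∀ j : {j // j ≠ i}, A j,
                (∏ j, Q j (e.symm p j)) * g (Function.update (e.symm p) i a) := by
              rw [Fintype.sum_prod_type]
              refine Finset.sum_congr rfl fun b _ => ?_
              rw [Finset.mul_sum]
              refine Finset.sum_congr rfl fun y _ => ?_
              rw [hprod_full, hupd, mul_assoc]
          _ = ∑ x : ∀ v, A v, (∏ j, Q j (x j)) * g (Function.update x i a) :=
              Equiv.sum_comp e.symm (fun x => (∏ j, Q j (x j)) * g (Function.update x i a))

/-- If `(Q₁, …, Qₙ)` is a mixed-strategy Nash equilibrium of the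
MRF-induced game and `Q = ∏ⱼ Qⱼ` is the induced product distribution, then for every
player `i`, the cross entropy `H(Q, P)` equals (and hence attains) the minimum of
`H(Q'i ⊗ Q×₋ᵢ, P)` over all distributions `Q'i` on `A i`. -/
theorem msne_cross_entropy_is_least
    {V : Type*} [Fintype V] [DecidableEq V]
    {A : V → Type*} [∀ v, Fintype (A v)] [∀ v, Nonempty (A v)]
    (𝒞 : Finset (Finset V))
    (φ : (C : Finset V) → ((j : {v // v ∈ C}) → A j.val) → ℝ)
    (Ψ : (∀ v, A v) → ℝ)
    (hΨ : ∀ x, Ψ x = ∑ C ∈ 𝒞, φ C (fun j => x j.val))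
    (M : V → (∀ v, A v) → ℝ)
    (hM : ∀ i x, M i x = ∑ C ∈ 𝒞.filter (fun C => i ∈ C), φ C (fun j => x j.val))
    (Z : ℝ) (hZ : Z = ∑ x : ∀ v, A v, Real.exp (Ψ x))
    (P : (∀ v, A v) → ℝ) (hP : ∀ x, P x = Real.exp (Ψ x) / Z)
    (Q : ∀ v, A v → ℝ)
    (hQ0 : ∀ v a, 0 ≤ Q v a) (hQ1 : ∀ v, ∑ a : A v, Q v a = 1)
    (hNE : ∀ (i : V) (x'i : A i),
      ∑ x : ∀ v, A v, (∏ j, Q j (x j)) * M i (Function.update x i x'i) ≤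
        ∑ x : ∀ v, A v, (∏ j, Q j (x j)) * M i x) :
    ∀ i : V,
      IsLeast
        {r : ℝ | ∃ Q'i : A i → ℝ, (∀ a, 0 ≤ Q'i a) ∧ (∑ a : A i, Q'i a = 1) ∧
          r = -(∑ x : ∀ v, A v,
            (Q'i (x i) * ∏ j ∈ Finset.univ.erase i, Q j (x j)) * Real.log (P x))}
        (-(∑ x : ∀ v, A v, (∏ j, Q j (x j)) * Real.log (P x))) := by
  intro i
  classical
  have hQprod : ∀ x : ∀ v, A v,
      ∏ j, Q j (x j) = Q i (x i) * ∏ j ∈ Finset.univ.erase i, Q j (x j) :=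
    fun x => (Finset.mul_prod_erase Finset.univ (fun j => Q j (x j)) (Finset.mem_univ i)).symm
  have hZpos : 0 < Z := by
    rw [hZ]
    exact Finset.sum_pos (fun x _ => Real.exp_pos _) Finset.univ_nonempty
  have hlog : ∀ x, Real.log (P x) = Ψ x - Real.log Z := by
    intro x
    rw [hP, Real.log_div (Real.exp_ne_zero _) hZpos.ne', Real.log_exp]
  set R : (∀ v, A v) → ℝ :=
    fun x => ∑ C ∈ 𝒞.filter (fun C => ¬ i ∈ C), φ C (fun j => x j.val) with hR
  have hsplit : ∀ x, Ψ x = M i x + R x := by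
    intro x
    rw [hΨ, hM, hR]
    exact (Finset.sum_filter_add_sum_filter_not 𝒞 _ _).symm
  have hRupd : ∀ (x : ∀ v, A v) (a : A i), R (Function.update x i a) = R x := by
    intro x a
    refine Finset.sum_congr rfl fun C hC => ?_
    have hiC : i ∉ C := (Finset.mem_filter.mp hC).2
    congr 1
    funext j
    exact Function.update_of_ne (fun h => hiC (by rw [← h]; exact j.2)) a x
  set T : A i → ℝ := fun a => ∑ x : ∀ v, A v, (∏ j, Q j (x j)) * M i (Function.update x i a)
    with hT
  set K : ℝ := ∑ x : ∀ v, A v, (∏ j, Q j (x j)) * (R x - Real.log Z) with hK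
  have hS : ∀ a : A i,
      ∑ x : ∀ v, A v, (∏ j, Q j (x j)) * Real.log (P (Function.update x i a)) = T a + K := by
    intro a
    rw [hT, hK, ← Finset.sum_add_distrib]
    refine Finset.sum_congr rfl fun x _ => ?_
    rw [hlog, hsplit, hRupd, ← mul_add]
    ring
  -- the value of the mixed extension for any mixed strategy
  have hval : ∀ W : A i → ℝ, (∑ a : A i, W a = 1) →
      ∑ x : ∀ v, A v, (W (x i) * ∏ j ∈ Finset.univ.erase i, Q j (x j)) * Real.log (P x)
        = (∑ a : A i, W a * T a) + K := by
    intro W hW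
    rw [keyL Q i (hQ1 i) W (fun x => Real.log (P x))]
    calc ∑ a : A i, W a * ∑ x : ∀ v, A v,
            (∏ j, Q j (x j)) * Real.log (P (Function.update x i a))
        = ∑ a : A i, (W a * T a + W a * K) := by
          refine Finset.sum_congr rfl fun a _ => ?_
          rw [hS a, mul_add]
      _ = (∑ a : A i, W a * T a) + K := by
          rw [Finset.sum_add_distrib, ← Finset.sum_mul, hW, one_mul]
  have hTstar : ∑ a : A i, Q i a * T a = ∑ x : ∀ v, A v, (∏ j, Q j (x j)) * M i x := by
    rw [← keyL Q i (hQ1 i) (Q i) (M i)]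
    exact Finset.sum_congr rfl fun x _ => by rw [← hQprod]
  constructor
  · refine ⟨Q i, hQ0 i, hQ1 i, ?_⟩
    congr 1
    exact Finset.sum_congr rfl fun x _ => by rw [hQprod]
  · rintro r ⟨Q', hQ'0, hQ'1, rfl⟩
    have hQsum : ∑ x : ∀ v, A v, (∏ j, Q j (x j)) * Real.log (P x)
        = (∑ a : A i, Q i a * T a) + K := by
      rw [← hval (Q i) (hQ1 i)]
      exact Finset.sum_congr rfl fun x _ => by rw [hQprod]
    have key : ∑ x : ∀ v, A v,
        (Q' (x i) * ∏ j ∈ Finset.univ.erase i, Q j (x j)) * Real.log (P x)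
          ≤ ∑ x : ∀ v, A v, (∏ j, Q j (x j)) * Real.log (P x) := by
      rw [hval Q' hQ'1, hQsum, hTstar]
      have h1 : ∑ a : A i, Q' a * T a
          ≤ ∑ a : A i, Q' a * (∑ x : ∀ v, A v, (∏ j, Q j (x j)) * M i x) := by
        refine Finset.sum_le_sum fun a _ => ?_
        exact mul_le_mul_of_nonneg_left (hNE i a) (hQ'0 a)
      rw [← Finset.sum_mul, hQ'1, one_mul] at h1
      linarith
    exact neg_le_neg key
end

section
/- If (Q_1, …, Q_n) is a mixed-strategy Nash equilibrium of the MRF-induced game and Q = ∏_j Q_j is the induced product distribution, then for every player i ∈ V: KL(Q ∥ P) + H(Q_i) = min_{Q'_i} [ KL(Q'_i Q×_{-i} ∥ P) + H(Q'_i) ], the minimum being over all distributions Q'_i on A_i. -/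
open Finset

private lemma sum_prod_pi' {ι : Type*} [Fintype ι] [DecidableEq ι] {κ : ι → Type*}
    [∀ i, Fintype (κ i)] (g : ∀ i, κ i → ℝ) :
    ∑ x : ∀ i, κ i, ∏ i, g i (x i) = ∏ i, ∑ b, g i b := (Fintype.prod_sum g).symm

/-- If `(Q₁, …, Qₙ)` is a mixed-strategy Nash equilibrium of the
MRF-induced game and `Q = ∏ⱼ Qⱼ`, then for every player `i`:
`KL(Q ∥ P) + H(Qᵢ)` equals (and hence attains) the minimum over distributions `Q'i`
on `A i` of `KL(Q'i ⊗ Q×₋ᵢ ∥ P) + H(Q'i)`. -/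
theorem msne_kl_entropy_is_least
    {V : Type*} [Fintype V] [DecidableEq V]
    {A : V → Type*} [∀ v, Fintype (A v)] [∀ v, Nonempty (A v)]
    (𝒞 : Finset (Finset V))
    (φ : (C : Finset V) → ((j : {v // v ∈ C}) → A j.val) → ℝ)
    (Ψ : (∀ v, A v) → ℝ)
    (hΨ : ∀ x, Ψ x = ∑ C ∈ 𝒞, φ C (fun j => x j.val))
    (M : V → (∀ v, A v) → ℝ)
    (hM : ∀ i x, M i x = ∑ C ∈ 𝒞.filter (fun C => i ∈ C), φ C (fun j => x j.val))
    (Z : ℝ) (hZ : Z = ∑ x : ∀ v, A v, Real.exp (Ψ x))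
    (P : (∀ v, A v) → ℝ) (hP : ∀ x, P x = Real.exp (Ψ x) / Z)
    (Q : ∀ v, A v → ℝ)
    (hQ0 : ∀ v a, 0 ≤ Q v a) (hQ1 : ∀ v, ∑ a : A v, Q v a = 1)
    (hNE : ∀ (i : V) (x'i : A i),
      ∑ x : ∀ v, A v, (∏ j, Q j (x j)) * M i (Function.update x i x'i) ≤
        ∑ x : ∀ v, A v, (∏ j, Q j (x j)) * M i x) :
    ∀ i : V,
      IsLeast
        {r : ℝ | ∃ Q'i : A i → ℝ, (∀ a, 0 ≤ Q'i a) ∧ (∑ a : A i, Q'i a = 1) ∧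
          r = (∑ x : ∀ v, A v,
              (Q'i (x i) * ∏ j ∈ Finset.univ.erase i, Q j (x j)) *
                Real.log ((Q'i (x i) * ∏ j ∈ Finset.univ.erase i, Q j (x j)) / P x)) +
            (-(∑ a : A i, Q'i a * Real.log (Q'i a)))}
        ((∑ x : ∀ v, A v,
            (∏ j, Q j (x j)) * Real.log ((∏ j, Q j (x j)) / P x)) +
          (-(∑ a : A i, Q i a * Real.log (Q i a)))) := by
  intro i
  classical
  have hZpos : 0 < Z := by
    rw [hZ]; exact Finset.sum_pos (fun x _ => Real.exp_pos _) Finset.univ_nonempty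
  set e := Equiv.piSplitAt i A with he
  set W' : (∀ j : {j // j ≠ i}, A j.1) → ℝ := fun y => ∏ j : {j // j ≠ i}, Q j.1 (y j)
    with hW'
  have hci : ∀ (a : A i) y, e.symm (a, y) i = a := by
    intro a y; simp [he, Equiv.piSplitAt]
  have hco : ∀ (a : A i) y (j : V) (h : j ≠ i), e.symm (a, y) j = y ⟨j, h⟩ := by
    intro a y j h; simp [he, Equiv.piSplitAt, h]
  have hW'nn : ∀ y, 0 ≤ W' y := fun y => Finset.prod_nonneg fun j _ => hQ0 _ _
  have hWe : ∀ (a : A i) y,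
      (∏ j ∈ Finset.univ.erase i, Q j (e.symm (a, y) j)) = W' y := by
    intro a y
    rw [hW']
    rw [Finset.prod_subtype (Finset.univ.erase i) (p := fun j => j ≠ i) (by simp)
      (fun j => Q j (e.symm (a, y) j))]
    exact Finset.prod_congr rfl fun j _ => by rw [hco a y j.1 j.2]
  have hsumW' : ∑ y, W' y = 1 := by
    rw [hW', sum_prod_pi']
    exact Finset.prod_eq_one fun j _ => hQ1 j.1
  have hsplit : ∀ F : (∀ v, A v) → ℝ,
      ∑ x, F x = ∑ a : A i, ∑ y, F (e.symm (a, y)) := by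
    intro F
    rw [← Equiv.sum_comp e.symm F, Fintype.sum_prod_type]
  have hupd : ∀ (a b : A i) y, Function.update (e.symm (b, y)) i a = e.symm (a, y) := by
    intro a b y; funext j
    by_cases h : j = i
    · subst h; rw [Function.update_self, hci]
    · rw [Function.update_of_ne h, hco b y j h, hco a y j h]
  set N : (∀ v, A v) → ℝ := fun x => ∑ C ∈ 𝒞.filter (fun C => ¬ i ∈ C),
    φ C (fun j => x j.1) with hN
  have hMN : ∀ x, Ψ x = M i x + N x := by
    intro x; rw [hΨ, hM, hN]
    exact (Finset.sum_filter_add_sum_filter_not 𝒞 _ _).symm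
  have hNa : ∀ (a b : A i) y, N (e.symm (a, y)) = N (e.symm (b, y)) := by
    intro a b y
    rw [hN]
    refine Finset.sum_congr rfl fun C hC => ?_
    have hiC : i ∉ C := (Finset.mem_filter.1 hC).2
    congr 1
    funext j
    have hj : j.1 ≠ i := fun h => hiC (h ▸ j.2)
    rw [hco a y j.1 hj, hco b y j.1 hj]
  obtain ⟨a₀⟩ : Nonempty (A i) := inferInstance
  set h : A i → ℝ := fun a => ∑ y, W' y * M i (e.symm (a, y)) with hh
  set K₁ : ℝ := ∑ y, W' y * Real.log (W' y) with hK₁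
  set K₂ : ℝ := ∑ y, W' y * N (e.symm (a₀, y)) with hK₂
  set K : ℝ := K₁ + Real.log Z - K₂ with hK
  -- the key identity
  have hKI : ∀ Q' : A i → ℝ, (∀ a, 0 ≤ Q' a) → (∑ a, Q' a = 1) →
      (∑ x, (Q' (x i) * ∏ j ∈ Finset.univ.erase i, Q j (x j)) *
          Real.log ((Q' (x i) * ∏ j ∈ Finset.univ.erase i, Q j (x j)) / P x)) +
        (-(∑ a, Q' a * Real.log (Q' a))) = K - ∑ a, Q' a * h a := by
    intro Q' h0 h1
    have hterm : ∀ (a : A i) y, (Q' a * W' y) * Real.log ((Q' a * W' y) / P (e.symm (a, y))) =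
        Q' a * (W' y * Real.log (Q' a)) + Q' a * (W' y * Real.log (W' y)) +
          Q' a * (W' y * Real.log Z) - Q' a * (W' y * Ψ (e.symm (a, y))) := by
      intro a y
      rcases eq_or_lt_of_le (h0 a) with hQa | hQa
      · simp [← hQa]
      rcases eq_or_lt_of_le (hW'nn y) with hWy | hWy
      · simp [← hWy]
      rw [hP, Real.log_div (by positivity) (by positivity),
        Real.log_mul (ne_of_gt hQa) (ne_of_gt hWy),
        Real.log_div (Real.exp_ne_zero _) (ne_of_gt hZpos), Real.log_exp]
      ring
    have haux : ∀ a : A i, (∑ y, (Q' a * W' y) * Real.log ((Q' a * W' y) / P (e.symm (a, y))))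
        = Q' a * Real.log (Q' a) + Q' a * K₁ + Q' a * Real.log Z - Q' a * (h a + K₂) := by
      intro a
      have hψ : ∑ y, W' y * Ψ (e.symm (a, y)) = h a + K₂ := by
        have h2 : ∀ y, W' y * Ψ (e.symm (a, y)) =
            W' y * M i (e.symm (a, y)) + W' y * N (e.symm (a₀, y)) := by
          intro y; rw [hMN, hNa a a₀ y]; ring
        rw [Finset.sum_congr rfl fun y _ => h2 y, Finset.sum_add_distrib, hh, hK₂]
      calc (∑ y, (Q' a * W' y) * Real.log ((Q' a * W' y) / P (e.symm (a, y))))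
          = ∑ y, (Q' a * (W' y * Real.log (Q' a)) + Q' a * (W' y * Real.log (W' y)) +
              Q' a * (W' y * Real.log Z) - Q' a * (W' y * Ψ (e.symm (a, y)))) :=
            Finset.sum_congr rfl fun y _ => hterm a y
        _ = Q' a * ((∑ y, W' y) * Real.log (Q' a)) + Q' a * K₁ +
              Q' a * ((∑ y, W' y) * Real.log Z) -
              Q' a * (∑ y, W' y * Ψ (e.symm (a, y))) := by
            simp only [Finset.sum_add_distrib, Finset.sum_sub_distrib, ← Finset.mul_sum,
              ← Finset.sum_mul, hK₁]
        _ = Q' a * Real.log (Q' a) + Q' a * K₁ + Q' a * Real.log Z - Q' a * (h a + K₂) := by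
            rw [hsumW', hψ]; ring
    have hfirst : (∑ x, (Q' (x i) * ∏ j ∈ Finset.univ.erase i, Q j (x j)) *
        Real.log ((Q' (x i) * ∏ j ∈ Finset.univ.erase i, Q j (x j)) / P x)) =
        ∑ a, (Q' a * Real.log (Q' a) + Q' a * K₁ + Q' a * Real.log Z - Q' a * (h a + K₂)) := by
      rw [hsplit]
      refine Finset.sum_congr rfl fun a _ => ?_
      rw [← haux a]
      exact Finset.sum_congr rfl fun y _ => by rw [hci, hWe]
    rw [hfirst]
    simp only [Finset.sum_add_distrib, Finset.sum_sub_distrib, ← Finset.sum_mul]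
    rw [h1, hK]
    simp only [Finset.mul_sum, mul_add]
    rw [Finset.sum_add_distrib, ← Finset.sum_mul, h1]
    ring
  have hQprod : ∀ x : ∀ v, A v,
      (∏ j, Q j (x j)) = Q i (x i) * ∏ j ∈ Finset.univ.erase i, Q j (x j) :=
    fun x => (Finset.mul_prod_erase univ _ (Finset.mem_univ i)).symm
  -- Nash inequality in terms of h
  have hg1 : ∀ a : A i, ∑ x, (∏ j, Q j (x j)) * M i (Function.update x i a) = h a := by
    intro a
    rw [hsplit]
    have : ∀ b : A i, ∑ y, (∏ j, Q j (e.symm (b, y) j)) *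
        M i (Function.update (e.symm (b, y)) i a) = Q i b * h a := by
      intro b
      rw [hh, Finset.mul_sum]
      refine Finset.sum_congr rfl fun y _ => ?_
      rw [hQprod, hci, hWe, hupd a b y]; ring
    rw [Finset.sum_congr rfl fun b _ => this b, ← Finset.sum_mul, hQ1, one_mul]
  have hg2 : ∑ x, (∏ j, Q j (x j)) * M i x = ∑ b, Q i b * h b := by
    rw [hsplit]
    refine Finset.sum_congr rfl fun b _ => ?_
    rw [hh, Finset.mul_sum]
    refine Finset.sum_congr rfl fun y _ => ?_
    rw [hQprod, hci, hWe]; ring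
  have hNash : ∀ a : A i, h a ≤ ∑ b, Q i b * h b := by
    intro a
    have := hNE i a
    rwa [hg1 a, hg2] at this
  have targetEq : (∑ x, (∏ j, Q j (x j)) * Real.log ((∏ j, Q j (x j)) / P x)) +
      (-(∑ a, Q i a * Real.log (Q i a))) = K - ∑ b, Q i b * h b := by
    simp only [hQprod]
    exact hKI (Q i) (hQ0 i) (hQ1 i)
  constructor
  · exact ⟨Q i, hQ0 i, hQ1 i, by simp only [hQprod]⟩
  · rintro r ⟨Q', h0, h1, rfl⟩
    rw [targetEq, hKI Q' h0 h1]
    refine sub_le_sub_left ?_ K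
    calc ∑ a, Q' a * h a ≤ ∑ a, Q' a * ∑ b, Q i b * h b :=
          Finset.sum_le_sum fun a _ => mul_le_mul_of_nonneg_left (hNash a) (h0 a)
      _ = ∑ b, Q i b * h b := by rw [← Finset.sum_mul, h1, one_mul]
end

section
/- The MRF-induced infinite game with entropy-regularized payoffs is an exact potential game: for every player i ∈ V, every profile of mixed strategies (Q_1, …, Q_n), and every alternative mixed strategy Q'_i for player i, M̃_i(Q'_i, Q_{-i}) − M̃_i(Q_i, Q_{-i}) = Ψ̃(Q'_i, Q_{-i}) − Ψ̃(Q_i, Q_{-i}), where M̃_i(Q) = Σ_{x∈A} (∏_j Q_j(x_j)) M_i(x) + H(Q_i) and Ψ̃(Q) = Σ_{x∈A} (∏_j Q_j(x_j)) Ψ(x) + Σ_{j∈V} H(Q_j). -/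
open Finset

lemma aux_sum_split {V : Type*} [Fintype V] [DecidableEq V]
    {A : V → Type*} [∀ v, Fintype (A v)] [∀ v, Nonempty (A v)]
    (i : V) (g : (∀ v, A v) → ℝ)
    (hg : ∀ (x : ∀ v, A v) (a : A i), g (Function.update x i a) = g x)
    (S : ∀ v, A v → ℝ) (h1 : ∑ a : A i, S i a = 1) :
    ∑ x : ∀ v, A v, (∏ j, S j (x j)) * g x
      = ∑ y : (∀ j : {j // j ≠ i}, A j.val),
          (∏ j : {j // j ≠ i}, S j.val (y j)) *
            g ((Equiv.piSplitAt i A).symm (Classical.arbitrary (A i), y)) := by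
  rw [← Equiv.sum_comp (Equiv.piSplitAt i A).symm
    (fun x => (∏ j, S j (x j)) * g x), Fintype.sum_prod_type]
  refine Finset.sum_comm.trans (Finset.sum_congr rfl fun y _ => ?_)
  have hxj : ∀ (a : A i) (j : V) (h : j ≠ i),
      (Equiv.piSplitAt i A).symm (a, y) j = y ⟨j, h⟩ := by
    intro a j h
    simp [Equiv.piSplitAt_symm_apply, h]
  have hxi : ∀ a : A i, (Equiv.piSplitAt i A).symm (a, y) i = a := by
    intro a; simp [Equiv.piSplitAt_symm_apply]
  have hupd : ∀ a : A i, (Equiv.piSplitAt i A).symm (a, y)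
      = Function.update ((Equiv.piSplitAt i A).symm (Classical.arbitrary (A i), y)) i a := by
    intro a; funext j
    by_cases h : j = i
    · subst h; rw [hxi, Function.update_self]
    · rw [hxj a j h, Function.update_of_ne h, hxj _ j h]
  have hgy : ∀ a : A i, g ((Equiv.piSplitAt i A).symm (a, y))
      = g ((Equiv.piSplitAt i A).symm (Classical.arbitrary (A i), y)) := by
    intro a; rw [hupd a, hg]
  have hprod : ∀ a : A i, (∏ j, S j ((Equiv.piSplitAt i A).symm (a, y) j))
      = S i a * ∏ j : {j // j ≠ i}, S j.val (y j) := by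
    intro a
    rw [← Finset.mul_prod_erase Finset.univ _ (Finset.mem_univ i), hxi]
    congr 1
    have hps := Finset.prod_subtype (F := inferInstance) (Finset.univ.erase i) (p := fun j => j ≠ i)
      (fun j => by simp) (fun j => S j ((Equiv.piSplitAt i A).symm (a, y) j))
    rw [hps]
    exact Finset.prod_congr rfl fun j _ => by rw [hxj a j.val j.2]
  calc ∑ a : A i, (∏ j, S j ((Equiv.piSplitAt i A).symm (a, y) j))
        * g ((Equiv.piSplitAt i A).symm (a, y))
      = ∑ a : A i, S i a * ((∏ j : {j // j ≠ i}, S j.val (y j))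
        * g ((Equiv.piSplitAt i A).symm (Classical.arbitrary (A i), y))) := by
        refine Finset.sum_congr rfl fun a _ => ?_
        rw [hprod, hgy]; ring
    _ = _ := by rw [← Finset.sum_mul, h1, one_mul]


/-- The MRF-induced infinite game with entropy-regularized payoffs
is an exact potential game: for every player `i`, every profile of mixed strategies
`Q`, and every alternative mixed strategy `Q'i` for player `i`, the change in
player `i`'s entropy-regularized payoff equals the change in the entropy-regularized
potential. -/
theorem infinite_game_exact_potential
    {V : Type*} [Fintype V] [DecidableEq V]
    {A : V → Type*} [∀ v, Fintype (A v)] [∀ v, Nonempty (A v)]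
    (𝒞 : Finset (Finset V))
    (φ : (C : Finset V) → ((j : {v // v ∈ C}) → A j.val) → ℝ)
    (Ψ : (∀ v, A v) → ℝ)
    (hΨ : ∀ x, Ψ x = ∑ C ∈ 𝒞, φ C (fun j => x j.val))
    (M : V → (∀ v, A v) → ℝ)
    (hM : ∀ i x, M i x = ∑ C ∈ 𝒞.filter (fun C => i ∈ C), φ C (fun j => x j.val))
    (Mt : V → (∀ v, A v → ℝ) → ℝ)
    (hMt : ∀ i (R : ∀ v, A v → ℝ),
      Mt i R = (∑ x : ∀ v, A v, (∏ j, R j (x j)) * M i x) +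
        (-(∑ a : A i, R i a * Real.log (R i a))))
    (Pt : (∀ v, A v → ℝ) → ℝ)
    (hPt : ∀ R : ∀ v, A v → ℝ,
      Pt R = (∑ x : ∀ v, A v, (∏ j, R j (x j)) * Ψ x) +
        ∑ j : V, (-(∑ a : A j, R j a * Real.log (R j a)))) :
    ∀ (i : V) (Q : ∀ v, A v → ℝ), (∀ v, (∀ a, 0 ≤ Q v a) ∧ ∑ a : A v, Q v a = 1) →
      ∀ Q'i : A i → ℝ, (∀ a, 0 ≤ Q'i a) → (∑ a : A i, Q'i a = 1) →
        Mt i (Function.update Q i Q'i) - Mt i Q =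
          Pt (Function.update Q i Q'i) - Pt Q := by
  intro i Q hQ Q'i hQ'pos hQ'sum
  set U : ∀ v, A v → ℝ := Function.update Q i Q'i with hUdef
  have hUi : U i = Q'i := Function.update_self i Q'i Q
  have hUj : ∀ j, j ≠ i → U j = Q j := fun j h => Function.update_of_ne h Q'i Q
  -- the difference Ψ - M i is independent of coordinate i
  set g : (∀ v, A v) → ℝ := fun x => Ψ x - M i x with hgdef
  have hgform : ∀ x, g x = ∑ C ∈ 𝒞.filter (fun C => ¬ i ∈ C), φ C (fun j => x j.val) := by
    intro x
    have := Finset.sum_filter_add_sum_filter_not 𝒞 (fun C => i ∈ C)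
      (fun C => φ C (fun j => x j.val))
    simp only [hgdef, hΨ, hM]
    linarith
  have hg : ∀ (x : ∀ v, A v) (a : A i), g (Function.update x i a) = g x := by
    intro x a
    rw [hgform, hgform]
    refine Finset.sum_congr rfl fun C hC => ?_
    have hiC : i ∉ C := (Finset.mem_filter.mp hC).2
    congr 1
    funext j
    exact Function.update_of_ne (fun h => hiC (by rw [← h]; exact j.2)) a x
  -- key expectations equality
  have hU1 : ∑ a : A i, U i a = 1 := by rw [hUi]; exact hQ'sum
  have hQ1 : ∑ a : A i, Q i a = 1 := (hQ i).2
  have hkey : ∑ x : ∀ v, A v, (∏ j, U j (x j)) * g x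
      = ∑ x : ∀ v, A v, (∏ j, Q j (x j)) * g x := by
    rw [aux_sum_split i g hg U hU1, aux_sum_split i g hg Q hQ1]
    refine Finset.sum_congr rfl fun y _ => ?_
    congr 1
    exact Finset.prod_congr rfl fun j _ => by rw [hUj j.val j.2]
  -- linearity: E[Ψ] - E[M] = E[g]
  have hlin : ∀ R : ∀ v, A v → ℝ,
      (∑ x : ∀ v, A v, (∏ j, R j (x j)) * Ψ x)
        - (∑ x : ∀ v, A v, (∏ j, R j (x j)) * M i x)
      = ∑ x : ∀ v, A v, (∏ j, R j (x j)) * g x := by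
    intro R
    rw [← Finset.sum_sub_distrib]
    exact Finset.sum_congr rfl fun x _ => by rw [hgdef]; ring
  -- entropy bookkeeping
  have hHU : ∑ j : V, (-(∑ a : A j, U j a * Real.log (U j a)))
      = (-(∑ a : A i, U i a * Real.log (U i a)))
        + ∑ j ∈ Finset.univ.erase i, (-(∑ a : A j, Q j a * Real.log (Q j a))) := by
    rw [← Finset.add_sum_erase Finset.univ _ (Finset.mem_univ i)]
    congr 1
    refine Finset.sum_congr rfl fun j hj => ?_
    rw [hUj j (Finset.mem_erase.mp hj).1]
  have hHQ : ∑ j : V, (-(∑ a : A j, Q j a * Real.log (Q j a)))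
      = (-(∑ a : A i, Q i a * Real.log (Q i a)))
        + ∑ j ∈ Finset.univ.erase i, (-(∑ a : A j, Q j a * Real.log (Q j a))) := by
    rw [← Finset.add_sum_erase Finset.univ _ (Finset.mem_univ i)]
  rw [hMt, hMt, hPt, hPt, hHU, hHQ]
  have h1 := hlin U
  have h2 := hlin Q
  linarith [hkey]
end

section
/- A profile of mixed strategies (Q_1, …, Q_n) is a pure-strategy equilibrium of the MRF-induced infinite game — i.e., for every i ∈ V and every mixed strategy Q'_i on A_i, M̃_i(Q_i, Q_{-i}) ≥ M̃_i(Q'_i, Q_{-i}), where M̃_i(Q) = Σ_{x∈A} (∏_j Q_j(x_j)) M_i(x) + H(Q_i) — if and only if for every i ∈ V: KL(∏_j Q_j ∥ P) = min_{Q'_i} KL(Q'_i ∏_{j≠i} Q_j ∥ P), the minimum being over all distributions Q'_i on A_i. That is, the equilibria of the infinite game are exactly the coordinate-wise local optima of the mean-field approximation of P. -/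
open Finset

section aux
variable {V : Type*} [Fintype V] [DecidableEq V] {A : V → Type*} [∀ v, Fintype (A v)]

private lemma sum_prod_pi'_s15 (f : ∀ v, A v → ℝ) :
    ∑ x : ∀ v, A v, ∏ j, f j (x j) = ∏ j, ∑ a, f j a := by
  rw [Finset.prod_univ_sum, Fintype.piFinset_univ]

set_option linter.unusedSectionVars false in
private lemma piSplitAt_symm_apply_same' (i : V) (a : A i) (y : ∀ j : {j // j ≠ i}, A j) :
    (Equiv.piSplitAt i A).symm (a, y) i = a := by
  simp [Equiv.piSplitAt]

set_option linter.unusedSectionVars false in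
private lemma piSplitAt_symm_update' (i : V) (a b : A i) (y : ∀ j : {j // j ≠ i}, A j) :
    (Equiv.piSplitAt i A).symm (a, y) =
      Function.update ((Equiv.piSplitAt i A).symm (b, y)) i a := by
  funext j
  by_cases h : j = i
  · subst h; simp [Equiv.piSplitAt]
  · simp [Equiv.piSplitAt, h, Function.update_of_ne h]

private lemma marg_eq' [∀ v, Nonempty (A v)] (i : V) (g g' : A i → ℝ)
    (hgg' : ∑ a, g a = ∑ a, g' a) (F : (∀ v, A v) → ℝ)
    (hF : ∀ x a, F (Function.update x i a) = F x) :
    ∑ x : ∀ v, A v, g (x i) * F x = ∑ x : ∀ v, A v, g' (x i) * F x := by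
  have key : ∀ h : A i → ℝ, ∑ x : ∀ v, A v, h (x i) * F x =
      (∑ a, h a) * ∑ y : ∀ j : {j // j ≠ i}, A j,
        F ((Equiv.piSplitAt i A).symm (Classical.arbitrary (A i), y)) := by
    intro h
    rw [← Equiv.sum_comp (Equiv.piSplitAt i A).symm fun x => h (x i) * F x,
      Fintype.sum_prod_type, Finset.sum_mul]
    refine Finset.sum_congr rfl fun a _ => ?_
    rw [Finset.mul_sum]
    refine Finset.sum_congr rfl fun y _ => ?_
    rw [piSplitAt_symm_apply_same',
      piSplitAt_symm_update' i a (Classical.arbitrary (A i)) y, hF]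
  rw [key, key, hgg']

end aux

private lemma pointwise_kl (q p' Pz : ℝ) (hq : 0 ≤ q) (hp' : 0 ≤ p') (hPz : 0 < Pz) :
    (q * p') * Real.log ((q * p') / Pz) =
      (q * Real.log q) * p' + q * (p' * Real.log p' + p' * (-Real.log Pz)) := by
  rcases eq_or_lt_of_le hq with hq0 | hq0
  · simp [← hq0]
  rcases eq_or_lt_of_le hp' with hp0 | hp0
  · simp [← hp0]
  rw [Real.log_div (by positivity) (ne_of_gt hPz), Real.log_mul (ne_of_gt hq0) (ne_of_gt hp0)]
  ring

/-- A profile of mixed strategies is a pure-strategy equilibrium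
of the MRF-induced infinite game (with entropy-regularized payoffs) iff, for every
player `i`, `KL(∏ⱼ Qⱼ ∥ P)` equals (and attains) the minimum over distributions
`Q'i` on `A i` of `KL(Q'i ⊗ ∏_{j≠i} Qⱼ ∥ P)`: the equilibria of the infinite game
are exactly the coordinate-wise local optima of the mean-field approximation. -/
theorem infinite_game_equilibrium_iff_mean_field_local_opt
    {V : Type*} [Fintype V] [DecidableEq V]
    {A : V → Type*} [∀ v, Fintype (A v)] [∀ v, Nonempty (A v)]
    (𝒞 : Finset (Finset V))
    (φ : (C : Finset V) → ((j : {v // v ∈ C}) → A j.val) → ℝ)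
    (Ψ : (∀ v, A v) → ℝ)
    (hΨ : ∀ x, Ψ x = ∑ C ∈ 𝒞, φ C (fun j => x j.val))
    (M : V → (∀ v, A v) → ℝ)
    (hM : ∀ i x, M i x = ∑ C ∈ 𝒞.filter (fun C => i ∈ C), φ C (fun j => x j.val))
    (Z : ℝ) (hZ : Z = ∑ x : ∀ v, A v, Real.exp (Ψ x))
    (P : (∀ v, A v) → ℝ) (hP : ∀ x, P x = Real.exp (Ψ x) / Z)
    (Mt : V → (∀ v, A v → ℝ) → ℝ)
    (hMt : ∀ i (R : ∀ v, A v → ℝ),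
      Mt i R = (∑ x : ∀ v, A v, (∏ j, R j (x j)) * M i x) +
        (-(∑ a : A i, R i a * Real.log (R i a))))
    (Q : ∀ v, A v → ℝ)
    (hQ0 : ∀ v a, 0 ≤ Q v a) (hQ1 : ∀ v, ∑ a : A v, Q v a = 1) :
    (∀ (i : V) (Q'i : A i → ℝ), (∀ a, 0 ≤ Q'i a) → (∑ a : A i, Q'i a = 1) →
        Mt i (Function.update Q i Q'i) ≤ Mt i Q) ↔
      (∀ i : V,
        IsLeast
          {r : ℝ | ∃ Q'i : A i → ℝ, (∀ a, 0 ≤ Q'i a) ∧ (∑ a : A i, Q'i a = 1) ∧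
            r = ∑ x : ∀ v, A v,
              (Q'i (x i) * ∏ j ∈ Finset.univ.erase i, Q j (x j)) *
                Real.log ((Q'i (x i) * ∏ j ∈ Finset.univ.erase i, Q j (x j)) / P x)}
          (∑ x : ∀ v, A v,
            (∏ j, Q j (x j)) * Real.log ((∏ j, Q j (x j)) / P x))) := by
  have hZpos : 0 < Z := by
    rw [hZ]
    exact Finset.sum_pos (fun x _ => Real.exp_pos _) Finset.univ_nonempty
  have hPpos : ∀ x, 0 < P x := fun x => by
    rw [hP]; exact div_pos (Real.exp_pos _) hZpos
  have hlogP : ∀ x, -Real.log (P x) = Real.log Z - Ψ x := fun x => by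
    rw [hP, Real.log_div (Real.exp_ne_zero _) (ne_of_gt hZpos), Real.log_exp]; ring
  -- notation for the "rest" product
  set pr : V → (∀ v, A v) → ℝ := fun i x => ∏ j ∈ Finset.univ.erase i, Q j (x j) with hpr
  -- the KL sum for a replaced strategy
  set KL : (i : V) → (A i → ℝ) → ℝ := fun i Q' =>
    ∑ x : ∀ v, A v, (Q' (x i) * pr i x) * Real.log ((Q' (x i) * pr i x) / P x) with hKL
  -- full product splits
  have hsplit : ∀ (i : V) (x : ∀ v, A v), (∏ j, Q j (x j)) = Q i (x i) * pr i x :=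
    fun i x => (Finset.mul_prod_erase Finset.univ (fun j => Q j (x j))
      (Finset.mem_univ i)).symm
  -- key identity: KL + Mt is constant in the replaced strategy
  have main : ∀ (i : V) (Q' : A i → ℝ), (∀ a, 0 ≤ Q' a) → (∑ a : A i, Q' a = 1) →
      KL i Q' + Mt i (Function.update Q i Q') =
        ∑ x : ∀ v, A v, Q i (x i) *
          (pr i x * Real.log (pr i x) + pr i x * (Real.log Z - Ψ x + M i x)) := by
    intro i Q' hQ'0 hQ'1
    -- the product for the updated profile
    have hupd : ∀ x : ∀ v, A v,
        (∏ j, (Function.update Q i Q') j (x j)) = Q' (x i) * pr i x := by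
      intro x
      rw [← Finset.mul_prod_erase Finset.univ
        (fun j => (Function.update Q i Q') j (x j)) (Finset.mem_univ i)]
      simp only [Function.update_self]
      congr 1
      exact Finset.prod_congr rfl fun j hj => by
        rw [Function.update_of_ne (Finset.ne_of_mem_erase hj)]
    have hMt' : Mt i (Function.update Q i Q') =
        (∑ x : ∀ v, A v, (Q' (x i) * pr i x) * M i x) -
          ∑ a : A i, Q' a * Real.log (Q' a) := by
      rw [hMt]
      simp only [Function.update_self]
      rw [sub_eq_add_neg]
      congr 1
      exact Finset.sum_congr rfl fun x _ => by rw [hupd]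
    -- entropy-like cross term sums to the entropy
    have hent : ∑ x : ∀ v, A v, (Q' (x i) * Real.log (Q' (x i))) * pr i x =
        ∑ a : A i, Q' a * Real.log (Q' a) := by
      have := sum_prod_pi'_s15 (A := A)
        (Function.update Q i (fun a => Q' a * Real.log (Q' a)))
      rw [show (∑ x : ∀ v, A v, (Q' (x i) * Real.log (Q' (x i))) * pr i x) =
          ∑ x : ∀ v, A v, ∏ j, (Function.update Q i
            (fun a => Q' a * Real.log (Q' a))) j (x j) from ?_, this]
      · rw [← Finset.mul_prod_erase Finset.univ
          (fun j => ∑ a, (Function.update Q i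
            (fun a => Q' a * Real.log (Q' a))) j a) (Finset.mem_univ i)]
        simp only [Function.update_self]
        rw [show (∏ j ∈ Finset.univ.erase i, ∑ a, (Function.update Q i
            (fun a => Q' a * Real.log (Q' a))) j a) = 1 from ?_, mul_one]
        rw [Finset.prod_congr rfl fun j hj => ?_]
        · exact Finset.prod_const_one
        · rw [show (∑ a, (Function.update Q i
            (fun a => Q' a * Real.log (Q' a))) j a) = ∑ a, Q j a from ?_, hQ1 j]
          exact Finset.sum_congr rfl fun a _ => by
            rw [Function.update_of_ne (Finset.ne_of_mem_erase hj)]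
      · refine Finset.sum_congr rfl fun x _ => ?_
        rw [← Finset.mul_prod_erase Finset.univ
          (fun j => (Function.update Q i
            (fun a => Q' a * Real.log (Q' a))) j (x j)) (Finset.mem_univ i)]
        simp only [Function.update_self]
        congr 1
        exact (Finset.prod_congr rfl fun j hj => by
          rw [Function.update_of_ne (Finset.ne_of_mem_erase hj)]).symm
    -- independence of the i-th coordinate
    have hprind : ∀ (x : ∀ v, A v) (a : A i), pr i (Function.update x i a) = pr i x := by
      intro x a
      exact Finset.prod_congr rfl fun j hj => by
        rw [Function.update_of_ne (Finset.ne_of_mem_erase hj)]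
    have hΨMind : ∀ (x : ∀ v, A v) (a : A i),
        Ψ (Function.update x i a) - M i (Function.update x i a) = Ψ x - M i x := by
      intro x a
      have hsum : ∀ y : ∀ v, A v, Ψ y - M i y =
          ∑ C ∈ 𝒞.filter (fun C => ¬ i ∈ C), φ C (fun j => y j.val) := by
        intro y
        rw [hΨ, hM, ← Finset.sum_filter_add_sum_filter_not 𝒞 (fun C => i ∈ C)
          (fun C => φ C (fun j => y j.val))]
        ring
      rw [hsum, hsum]
      refine Finset.sum_congr rfl fun C hC => ?_
      have hiC : i ∉ C := (Finset.mem_filter.mp hC).2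
      congr 1
      funext j
      have hji : j.val ≠ i := fun h => hiC (by rw [← h]; exact j.property)
      exact Function.update_of_ne hji _ _
    -- rewrite KL pointwise and reassemble
    have hKLsplit : KL i Q' =
        (∑ x : ∀ v, A v, (Q' (x i) * Real.log (Q' (x i))) * pr i x) +
          ∑ x : ∀ v, A v, Q' (x i) *
            (pr i x * Real.log (pr i x) + pr i x * (Real.log Z - Ψ x)) := by
      rw [hKL, ← Finset.sum_add_distrib]
      refine Finset.sum_congr rfl fun x _ => ?_
      rw [pointwise_kl (Q' (x i)) (pr i x) (P x) (hQ'0 _)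
        (Finset.prod_nonneg fun j _ => hQ0 j _) (hPpos x), hlogP x]
    rw [hKLsplit, hMt', hent]
    have hcomb : (∑ x : ∀ v, A v, Q' (x i) *
          (pr i x * Real.log (pr i x) + pr i x * (Real.log Z - Ψ x))) +
        (∑ x : ∀ v, A v, (Q' (x i) * pr i x) * M i x) =
        ∑ x : ∀ v, A v, Q' (x i) *
          (pr i x * Real.log (pr i x) + pr i x * (Real.log Z - Ψ x + M i x)) := by
      rw [← Finset.sum_add_distrib]
      exact Finset.sum_congr rfl fun x _ => by ring
    have hmarg := marg_eq' i Q' (Q i) (hQ'1.trans (hQ1 i).symm)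
      (fun x => pr i x * Real.log (pr i x) + pr i x * (Real.log Z - Ψ x + M i x))
      (fun x a => by
        have h1 := hprind x a
        have h2 := hΨMind x a
        beta_reduce
        rw [h1]
        have h3 : Real.log Z - Ψ (Function.update x i a) + M i (Function.update x i a) =
            Real.log Z - Ψ x + M i x := by linarith
        rw [h3])
    linarith [hcomb, hmarg]
  -- the target KL equals KL i (Q i), and update Q i (Q i) = Q
  have htarget : ∀ i : V,
      (∑ x : ∀ v, A v, (∏ j, Q j (x j)) * Real.log ((∏ j, Q j (x j)) / P x)) =
        KL i (Q i) := by
    intro i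
    exact Finset.sum_congr rfl fun x _ => by rw [hsplit i x]
  have hmainQ : ∀ i : V,
      KL i (Q i) + Mt i Q =
        ∑ x : ∀ v, A v, Q i (x i) *
          (pr i x * Real.log (pr i x) + pr i x * (Real.log Z - Ψ x + M i x)) := by
    intro i
    have := main i (Q i) (hQ0 i) (hQ1 i)
    rwa [Function.update_eq_self] at this
  constructor
  · intro h i
    constructor
    · exact ⟨Q i, hQ0 i, hQ1 i, htarget i⟩
    · rintro r ⟨Q', hQ'0, hQ'1, rfl⟩
      have h1 := main i Q' hQ'0 hQ'1
      have h2 := hmainQ i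
      have h3 := h i Q' hQ'0 hQ'1
      rw [htarget i]
      linarith
  · intro h i Q' hQ'0 hQ'1
    have hlb := (h i).2 ⟨Q', hQ'0, hQ'1, rfl⟩
    rw [htarget i] at hlb
    have h1 := main i Q' hQ'0 hQ'1
    have h2 := hmainQ i
    linarith
end
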